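/- Let q be a prime power, let r > h ≥ 1, and let 𝒮 be a projective h-(n,r,s)_q system. Then n·[r−h]_q ≤ s·[r]_q. Moreover, ([r]_q·s)/[r−h]_q is an integer if and only if [r−h]_q/[gcd(r,h)]_q divides s. Finally, if 𝒮 is faithful and n·[r−h]_q = s·[r]_q, then every point of F_q^r is contained in exactly ([h]_q·s)/[r−h]_q elements of 𝒮. -/

import Mathlib

open scoped Classical

noncomputable section

/-- `[i]_q = 1 + q + ⋯ + q^(i-1)`, with `[0]_q = 0`. -/
def gNum (q i : ℕ) : ℕ := ∑ j ∈ Finset.range i, q ^ j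

/-- The number of elements of the multiset `S` of subspaces contained in the subspace `U`,
counted with multiplicity. -/
def cnt {F V : Type*} [Field F] [AddCommGroup V] [Module F V]
    (S : Multiset (Submodule F V)) (U : Submodule F V) : ℕ :=
  Multiset.countP (fun W => W ≤ U) S

/-- The number of elements of the multiset `S` of subspaces that contain the subspace `P`,
counted with multiplicity. -/
def mult {F V : Type*} [Field F] [AddCommGroup V] [Module F V]
    (S : Multiset (Submodule F V)) (P : Submodule F V) : ℕ :=
  Multiset.countP (fun W => P ≤ W) S

/-- `S` is a projective `h-(n,r,s)_q` system in `F^r`. -/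
def IsSystem {F : Type*} [Field F] [Fintype F] {r : ℕ} (h n s : ℕ)
    (S : Multiset (Submodule F (Fin r → F))) : Prop :=
  Multiset.card S = n ∧ (∀ W ∈ S, Module.finrank F W ≤ h) ∧
  (∀ H : Submodule F (Fin r → F), Module.finrank F H = r - 1 → cnt S H ≤ s) ∧
  (∃ H : Submodule F (Fin r → F), Module.finrank F H = r - 1 ∧ cnt S H = s)

/-! ### Auxiliary numeric lemmas -/

lemma gNum_mul_int (q i : ℕ) : (gNum q i : ℤ) * (q - 1) = q ^ i - 1 := by
  have := geom_sum_mul (q : ℤ) i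
  rw [gNum]; push_cast; linarith

lemma gNum_mul (q : ℕ) (hq : 1 ≤ q) (i : ℕ) : gNum q i * (q - 1) = q ^ i - 1 := by
  have h1 : 1 ≤ q ^ i := Nat.one_le_pow _ _ hq
  have := gNum_mul_int q i
  zify [hq, h1]
  linarith

lemma gNum_mono (q : ℕ) {i j : ℕ} (hij : i ≤ j) : gNum q i ≤ gNum q j :=
  Finset.sum_le_sum_of_subset (Finset.range_subset_range.mpr hij)

lemma gNum_pos (q : ℕ) {i : ℕ} (hi : 1 ≤ i) : 0 < gNum q i := by
  have : gNum q 1 ≤ gNum q i := gNum_mono q hi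
  have h1 : gNum q 1 = 1 := by simp [gNum]
  omega

lemma gcd_pow_sub_one (q : ℕ) (hq : 1 ≤ q) (a b : ℕ) :
    Nat.gcd (q ^ a - 1) (q ^ b - 1) = q ^ Nat.gcd a b - 1 := by
  induction a using Nat.strong_induction_on generalizing b with
  | _ a ih =>
    rcases Nat.eq_zero_or_pos a with rfl | ha
    · simp
    · have hdvd : (q ^ a - 1) ∣ (q ^ a) ^ (b / a) - 1 ^ (b / a) :=
        Nat.sub_dvd_pow_sub_pow _ _ _
      rw [one_pow] at hdvd
      obtain ⟨c, hc⟩ := hdvd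
      have hX : 1 ≤ (q ^ a) ^ (b / a) := Nat.one_le_pow _ _ (Nat.one_le_pow _ _ hq)
      have hR : 1 ≤ q ^ (b % a) := Nat.one_le_pow _ _ hq
      have hqb : q ^ b = (q ^ a) ^ (b / a) * q ^ (b % a) := by
        rw [← pow_mul, ← pow_add, Nat.div_add_mod]
      have h2 : (q ^ a - 1) * (c * q ^ (b % a)) = ((q ^ a) ^ (b / a) - 1) * q ^ (b % a) := by
        rw [hc]; ring
      have h3 : ((q ^ a) ^ (b / a) - 1) * q ^ (b % a)
          = (q ^ a) ^ (b / a) * q ^ (b % a) - q ^ (b % a) := by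
        rw [Nat.sub_mul, one_mul]
      have h4 : q ^ (b % a) ≤ (q ^ a) ^ (b / a) * q ^ (b % a) :=
        Nat.le_mul_of_pos_left _ hX
      have hsplit : q ^ b - 1 = (q ^ (b % a) - 1) + (q ^ a - 1) * (c * q ^ (b % a)) := by
        rw [h2, h3, hqb]; omega
      rw [hsplit, Nat.gcd_add_mul_left_right, Nat.gcd_comm, ih (b % a) (Nat.mod_lt _ ha) a,
        Nat.gcd_rec a b]

lemma gNum_gcd (q : ℕ) (hq : 2 ≤ q) (a b : ℕ) :
    Nat.gcd (gNum q a) (gNum q b) = gNum q (Nat.gcd a b) := by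
  have hq1 : 1 ≤ q := by omega
  have key := gcd_pow_sub_one q hq1 a b
  rw [← gNum_mul q hq1 a, ← gNum_mul q hq1 b, ← gNum_mul q hq1 (a.gcd b),
    mul_comm (gNum q a), mul_comm (gNum q b), Nat.gcd_mul_left,
    mul_comm (gNum q (a.gcd b))] at key
  exact Nat.eq_of_mul_eq_mul_left (show 0 < q - 1 by omega) key

lemma dvd_mul_iff_div_gcd (a b s : ℕ) (ha : 0 < a) :
    a ∣ b * s ↔ a / Nat.gcd a b ∣ s := by
  set g := Nat.gcd a b with hg
  have hg0 : 0 < g := Nat.gcd_pos_of_pos_left _ ha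
  have hag : g ∣ a := Nat.gcd_dvd_left _ _
  have hbg : g ∣ b := Nat.gcd_dvd_right _ _
  have hcop : Nat.Coprime (a / g) (b / g) := Nat.coprime_div_gcd_div_gcd hg0
  constructor
  · intro h
    have h2 : g * (a / g) ∣ g * ((b / g) * s) := by
      rwa [← mul_assoc, Nat.mul_div_cancel' hag, Nat.mul_div_cancel' hbg] at *
    have h3 : (a / g) ∣ (b / g) * s := (Nat.mul_dvd_mul_iff_left hg0).mp h2
    exact (Nat.Coprime.dvd_mul_left hcop).mp h3
  · intro h
    have h1 : a ∣ g * s := by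
      obtain ⟨t, ht⟩ := h
      exact ⟨t, by rw [ht, ← mul_assoc, Nat.mul_div_cancel' hag]⟩
    exact h1.trans (mul_dvd_mul_right hbg s)

/-! ### Counting hyperplanes -/

open Module Finset

section Geometry

variable {F V : Type*} [Field F] [Fintype F] [AddCommGroup V] [Module F V] [Fintype V]

instance : Fintype (Module.Dual F V) :=
  Fintype.ofInjective (fun f => (f : V → F)) DFunLike.coe_injective

/-- A nonzero functional has kernel of corank 1. -/
lemma finrank_ker_of_ne_zero {φ : Module.Dual F V} (hφ : φ ≠ 0) :
    finrank F (LinearMap.ker φ) = finrank F V - 1 := by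
  have hr : LinearMap.range φ = ⊤ := by
    obtain ⟨x, hx⟩ : ∃ x, φ x ≠ 0 := by
      by_contra hc
      push_neg at hc
      exact hφ (LinearMap.ext fun x => hc x)
    apply Submodule.eq_top_of_finrank_eq
    have h1 : finrank F (LinearMap.range φ) ≤ finrank F F := Submodule.finrank_le _
    have h2 : 0 < finrank F (LinearMap.range φ) := by
      rw [Module.finrank_pos_iff_exists_ne_zero]
      exact ⟨⟨φ x, LinearMap.mem_range_self _ _⟩, by simpa using hx⟩
    simp only [Module.finrank_self] at h1 ⊢
    omega
  have := LinearMap.finrank_range_add_finrank_ker φ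
  rw [hr, finrank_top, Module.finrank_self] at this
  omega

/-- Every hyperplane is the kernel of some nonzero functional. -/
lemma exists_functional (H : Submodule F V) (hr : 1 ≤ finrank F V)
    (hH : finrank F H = finrank F V - 1) :
    ∃ φ : Module.Dual F V, φ ≠ 0 ∧ LinearMap.ker φ = H := by
  have hq : finrank F (V ⧸ H) = finrank F F := by
    have := H.finrank_quotient_add_finrank
    rw [Module.finrank_self]
    omega
  obtain ⟨e⟩ : Nonempty ((V ⧸ H) ≃ₗ[F] F) := ⟨LinearEquiv.ofFinrankEq _ _ hq⟩
  refine ⟨e.toLinearMap ∘ₗ H.mkQ, ?_, ?_⟩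
  · intro h0
    have hker : LinearMap.ker (e.toLinearMap ∘ₗ H.mkQ) = ⊤ := by rw [h0]; exact LinearMap.ker_zero
    rw [LinearMap.ker_comp, LinearEquiv.ker, Submodule.comap_bot, Submodule.ker_mkQ] at hker
    have : finrank F H = finrank F V := by rw [hker, finrank_top]
    omega
  · rw [LinearMap.ker_comp, LinearEquiv.ker, Submodule.comap_bot, Submodule.ker_mkQ]

/-- Two nonzero functionals with the same kernel are proportional. -/
lemma eq_smul_of_ker_eq (hr : 1 ≤ finrank F V) {φ ψ : Module.Dual F V} (hφ : φ ≠ 0) (hψ : ψ ≠ 0)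
    (h : LinearMap.ker φ = LinearMap.ker ψ) : ∃ c : F, c ≠ 0 ∧ φ = c • ψ := by
  have hHne : LinearMap.ker ψ ≠ ⊤ := by
    intro ht
    exact hψ (LinearMap.ext fun x => by
      have : x ∈ LinearMap.ker ψ := ht ▸ Submodule.mem_top
      simpa using this)
  obtain ⟨x, hx⟩ : ∃ x, x ∉ LinearMap.ker ψ := by
    by_contra hc; push_neg at hc
    exact hHne (Submodule.eq_top_iff'.2 hc)
  have hψx : ψ x ≠ 0 := by simpa [LinearMap.mem_ker] using hx
  have hφx : φ x ≠ 0 := by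
    have : x ∉ LinearMap.ker φ := by rw [h]; exact hx
    simpa [LinearMap.mem_ker] using this
  refine ⟨φ x / ψ x, div_ne_zero hφx hψx, ?_⟩
  have hsup : LinearMap.ker ψ ⊔ Submodule.span F {x} = ⊤ := by
    apply Submodule.eq_top_of_finrank_eq
    have hlt : LinearMap.ker ψ < LinearMap.ker ψ ⊔ Submodule.span F {x} := by
      refine lt_of_le_of_ne le_sup_left ?_
      intro he
      exact hx (by rw [he]; exact Submodule.mem_sup_right (Submodule.mem_span_singleton_self x))
    have h1 : finrank F (LinearMap.ker ψ) < finrank F ↥(LinearMap.ker ψ ⊔ Submodule.span F {x}) :=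
      Submodule.finrank_lt_finrank_of_lt hlt
    have h2 : finrank F ↥(LinearMap.ker ψ ⊔ Submodule.span F {x}) ≤ finrank F V :=
      Submodule.finrank_le _
    have h3 : finrank F (LinearMap.ker ψ) = finrank F V - 1 := finrank_ker_of_ne_zero hψ
    omega
  have hker : LinearMap.ker (φ - (φ x / ψ x) • ψ) = ⊤ := by
    rw [eq_top_iff, ← hsup, sup_le_iff]
    constructor
    · intro y hy
      have hy' : φ y = 0 := by
        have : y ∈ LinearMap.ker φ := by rw [h]; exact hy
        simpa [LinearMap.mem_ker] using this
      have hy'' : ψ y = 0 := LinearMap.mem_ker.mp hy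
      simp [LinearMap.mem_ker, hy', hy'']
    · rw [Submodule.span_le, Set.singleton_subset_iff]
      have : φ x - φ x / ψ x * ψ x = 0 := by field_simp; ring
      simpa [LinearMap.mem_ker] using this
  have : φ - (φ x / ψ x) • ψ = 0 := by
    apply LinearMap.ext; intro y
    have : y ∈ LinearMap.ker (φ - (φ x / ψ x) • ψ) := hker ▸ Submodule.mem_top
    simpa using this
  have := sub_eq_zero.mp this
  exact this

lemma finrank_dualAnn (W : Submodule F V) :
    finrank F W.dualAnnihilator = finrank F V - finrank F W := by
  have e : Module.finrank F (V ⧸ W) = Module.finrank F W.dualAnnihilator :=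
    LinearEquiv.finrank_eq (Subspace.quotEquivAnnihilator W)
  have h1 := W.finrank_quotient_add_finrank
  have h2 : finrank F W ≤ finrank F V := Submodule.finrank_le _
  omega

lemma card_hyp_mul (hr : 1 ≤ finrank F V) (W : Submodule F V) :
    (Finset.univ.filter fun H : Submodule F V =>
        finrank F H = finrank F V - 1 ∧ W ≤ H).card * (Fintype.card F - 1)
      = Fintype.card F ^ (finrank F V - finrank F W) - 1 := by
  set A : Finset (Module.Dual F V) :=
    Finset.univ.filter (fun φ => φ ∈ W.dualAnnihilator ∧ φ ≠ 0) with hA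
  set T : Finset (Submodule F V) :=
    Finset.univ.filter (fun H => finrank F H = finrank F V - 1 ∧ W ≤ H) with hT
  have hAmem : ∀ φ : Module.Dual F V,
      φ ∈ A ↔ φ ∈ W.dualAnnihilator ∧ φ ≠ 0 := by
    intro φ; simp [hA]
  have hTmem : ∀ H : Submodule F V,
      H ∈ T ↔ finrank F H = finrank F V - 1 ∧ W ≤ H := by
    intro H; simp [hT]
  -- card of A
  have hcardA : A.card = Fintype.card F ^ (finrank F V - finrank F W) - 1 := by
    have h1 : A = (Finset.univ.filter
        (fun φ : Module.Dual F V => φ ∈ W.dualAnnihilator)).erase 0 := by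
      ext φ
      simp only [Finset.mem_erase, Finset.mem_filter, Finset.mem_univ, true_and, hAmem]
      tauto
    have h0 : (0 : Module.Dual F V) ∈ Finset.univ.filter
        (fun φ : Module.Dual F V => φ ∈ W.dualAnnihilator) := by
      simp [Submodule.zero_mem]
    have h2 : (Finset.univ.filter
        (fun φ : Module.Dual F V => φ ∈ W.dualAnnihilator)).card
        = Fintype.card W.dualAnnihilator := (Fintype.card_subtype _).symm
    have h3 : Fintype.card W.dualAnnihilator
        = Fintype.card F ^ (finrank F V - finrank F W) := by
      rw [card_eq_pow_finrank (K := F), finrank_dualAnn]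
    rw [h1, Finset.card_erase_of_mem h0, h2, h3]
  -- fiberwise count
  have hmapsto : ∀ φ ∈ A, LinearMap.ker φ ∈ T := by
    intro φ hφ
    rw [hAmem] at hφ
    rw [hTmem]
    refine ⟨finrank_ker_of_ne_zero hφ.2, ?_⟩
    intro w hw
    exact LinearMap.mem_ker.mpr ((Submodule.mem_dualAnnihilator φ).mp hφ.1 w hw)
  have hfib := Finset.card_eq_sum_card_fiberwise hmapsto
  have hfibcard : ∀ H ∈ T, (A.filter fun φ => LinearMap.ker φ = H).card
      = Fintype.card F - 1 := by
    intro H hH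
    rw [hTmem] at hH
    obtain ⟨φ₀, hφ₀, hker₀⟩ := exists_functional H hr hH.1
    have himg : A.filter (fun φ => LinearMap.ker φ = H)
        = Finset.univ.image (fun c : Fˣ => (c : F) • φ₀) := by
      ext φ
      simp only [Finset.mem_filter, Finset.mem_image, Finset.mem_univ, true_and, hAmem]
      constructor
      · rintro ⟨⟨hann, hne⟩, hkφ⟩
        obtain ⟨c, hc, hcs⟩ := eq_smul_of_ker_eq hr hne hφ₀ (by rw [hkφ, hker₀])
        exact ⟨Units.mk0 c hc, hcs.symm⟩
      · rintro ⟨c, rfl⟩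
        have hc : (c : F) ≠ 0 := c.ne_zero
        have hkc : LinearMap.ker ((c : F) • φ₀) = H := by
          rw [LinearMap.ker_smul _ _ hc, hker₀]
        refine ⟨⟨?_, ?_⟩, hkc⟩
        · apply Submodule.smul_mem
          rw [Submodule.mem_dualAnnihilator]
          intro w hw
          exact LinearMap.mem_ker.mp (hker₀ ▸ hH.2 hw)
        · exact smul_ne_zero hc hφ₀
    have hinj : Function.Injective (fun c : Fˣ => (c : F) • φ₀) := by
      intro c c' hcc
      exact Units.ext (smul_left_injective F hφ₀ hcc)
    rw [himg, Finset.card_image_of_injective _ hinj, Finset.card_univ, Fintype.card_units]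
  rw [hfib, Finset.sum_congr rfl hfibcard, Finset.sum_const, smul_eq_mul] at hcardA
  omega

lemma card_hyp (hr : 1 ≤ finrank F V) (W : Submodule F V) :
    (Finset.univ.filter fun H : Submodule F V =>
        finrank F H = finrank F V - 1 ∧ W ≤ H).card
      = gNum (Fintype.card F) (finrank F V - finrank F W) := by
  have hq : 1 < Fintype.card F := Fintype.one_lt_card
  have h1 := card_hyp_mul hr W
  have h2 := gNum_mul (Fintype.card F) (le_of_lt hq) (finrank F V - finrank F W)
  have : 0 < Fintype.card F - 1 := by omega
  exact Nat.eq_of_mul_eq_mul_right this (by rw [h1, h2])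

/-- Double counting: summing `cnt` over a finite set of subspaces. -/
lemma sum_cnt (T : Finset (Submodule F V)) (S : Multiset (Submodule F V)) :
    ∑ H ∈ T, cnt S H = (S.map (fun W => (T.filter fun H => W ≤ H).card)).sum := by
  induction S using Multiset.induction_on with
  | empty => simp [cnt]
  | cons a S ih =>
    simp only [cnt, Multiset.countP_cons, Multiset.map_cons, Multiset.sum_cons] at *
    rw [Finset.sum_add_distrib, ih, ← Finset.card_filter]
    omega

end Geometry

theorem statement6 (F : Type*) [Field F] [Fintype F] (q r h n s : ℕ)
    (hq : q = Fintype.card F) (hh : 1 ≤ h) (hhr : h < r)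
    (S : Multiset (Submodule F (Fin r → F))) (hS : IsSystem h n s S) :
    -- the basic upper bound `n ≤ [r]_q·s / [r−h]_q`
    n * gNum q (r - h) ≤ s * gNum q r ∧
    -- `[r]_q·s / [r−h]_q` is an integer iff `[r−h]_q/[gcd(r,h)]_q` divides `s`
    (gNum q (r - h) ∣ gNum q r * s ↔ (gNum q (r - h) / gNum q (Nat.gcd r h)) ∣ s) ∧
    -- in the case of equality, for a faithful system each point lies on
    -- exactly `[h]_q·s/[r−h]_q` elements
    ((∀ W ∈ S, Module.finrank F W = h) → n * gNum q (r - h) = s * gNum q r →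
      ∀ P : Submodule F (Fin r → F), Module.finrank F P = 1 →
        mult S P * gNum q (r - h) = gNum q h * s) := by
  obtain ⟨hcard, hdim, hle, H₀, hH₀, hcnt₀⟩ := hS
  have hq2 : 2 ≤ q := by rw [hq]; exact Fintype.one_lt_card
  have rV : Module.finrank F (Fin r → F) = r := Module.finrank_fin_fun F
  have hr1 : 1 ≤ Module.finrank F (Fin r → F) := by omega
  -- the number of hyperplanes through a given subspace
  have hcardW : ∀ W : Submodule F (Fin r → F),
      (Finset.univ.filter fun H : Submodule F (Fin r → F) =>
        Module.finrank F H = r - 1 ∧ W ≤ H).card = gNum q (r - Module.finrank F W) := by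
    intro W
    have := card_hyp hr1 W
    rw [rV] at this
    rw [hq]
    exact this
  set Tb := Finset.univ.filter fun H : Submodule F (Fin r → F) =>
      Module.finrank F H = r - 1 ∧ (⊥ : Submodule F (Fin r → F)) ≤ H with hTb
  have hTbcard : Tb.card = gNum q r := by
    have := hcardW ⊥
    rw [finrank_bot, Nat.sub_zero] at this
    exact this
  have hfilterTb : ∀ W : Submodule F (Fin r → F), Tb.filter (fun H => W ≤ H)
      = Finset.univ.filter
        (fun H : Submodule F (Fin r → F) => Module.finrank F H = r - 1 ∧ W ≤ H) := by
    intro W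
    rw [hTb, Finset.filter_filter]
    apply Finset.filter_congr
    intro H _
    simp [bot_le]
  have hterm : ∀ W : Submodule F (Fin r → F), (Tb.filter fun H => W ≤ H).card
      = gNum q (r - Module.finrank F W) := by
    intro W
    rw [hfilterTb]
    exact hcardW W
  have hswap := sum_cnt Tb S
  -- the upper bound on the total
  have hupper : ∑ H ∈ Tb, cnt S H ≤ gNum q r * s := by
    calc ∑ H ∈ Tb, cnt S H ≤ ∑ _H ∈ Tb, s :=
          Finset.sum_le_sum fun H hH => hle H (Finset.mem_filter.mp hH).2.1
    _ = gNum q r * s := by rw [Finset.sum_const, smul_eq_mul, hTbcard]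
  -- the lower bound on the total
  have hlower : n * gNum q (r - h) ≤ ∑ H ∈ Tb, cnt S H := by
    rw [hswap]
    have h1 : (S.map (fun _ => gNum q (r - h))).sum
        ≤ (S.map (fun W => (Tb.filter fun H => W ≤ H).card)).sum := by
      apply Multiset.sum_map_le_sum_map
      intro W hW
      rw [hterm W]
      exact gNum_mono q (by have := hdim W hW; omega)
    have h2 : (S.map (fun _ => gNum q (r - h))).sum = n * gNum q (r - h) := by
      rw [Multiset.map_const', Multiset.sum_replicate, smul_eq_mul, hcard]
    omega
  refine ⟨by calc n * gNum q (r - h) ≤ gNum q r * s := le_trans hlower hupper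
            _ = s * gNum q r := mul_comm _ _, ?_, ?_⟩
  · -- the divisibility criterion
    have h1 : 0 < gNum q (r - h) := gNum_pos q (by omega)
    have hgcd : Nat.gcd (gNum q (r - h)) (gNum q r) = gNum q (Nat.gcd r h) := by
      rw [gNum_gcd q hq2]
      congr 1
      have e1 : r = h + (r - h) := by omega
      calc Nat.gcd (r - h) r = Nat.gcd (r - h) (h + (r - h)) := by rw [← e1]
      _ = Nat.gcd (r - h) h := Nat.gcd_add_self_right _ _
      _ = Nat.gcd h (r - h) := Nat.gcd_comm _ _
      _ = Nat.gcd h r := Nat.gcd_sub_self_right (le_of_lt hhr)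
      _ = Nat.gcd r h := Nat.gcd_comm _ _
    rw [dvd_mul_iff_div_gcd _ _ s h1, hgcd]
  · -- the equality case
    intro hfa heq P hP
    -- every hyperplane contains exactly s elements
    have hall : ∀ H : Submodule F (Fin r → F),
        Module.finrank F H = r - 1 → cnt S H = s := by
      have hsum : ∑ H ∈ Tb, cnt S H = ∑ _H ∈ Tb, s := by
        rw [hswap]
        have hmapeq : S.map (fun W => (Tb.filter fun H => W ≤ H).card)
            = S.map (fun _ => gNum q (r - h)) :=
          Multiset.map_congr rfl fun W hW => by rw [hterm W, hfa W hW]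
        rw [hmapeq, Multiset.map_const', Multiset.sum_replicate, smul_eq_mul, hcard, heq,
          Finset.sum_const, smul_eq_mul, hTbcard, mul_comm]
      have hiff := (Finset.sum_eq_sum_iff_of_le
        (fun H hH => hle H (Finset.mem_filter.mp hH).2.1)).mp hsum
      intro H hH
      exact hiff H (by rw [hTb]; simp [hH])
    -- sum over hyperplanes through P
    set TP := Finset.univ.filter fun H : Submodule F (Fin r → F) =>
        Module.finrank F H = r - 1 ∧ P ≤ H with hTP
    have hTPcard : TP.card = gNum q (r - 1) := by
      have := hcardW P
      rw [hP] at this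
      exact this
    have hsumTP : ∑ H ∈ TP, cnt S H = gNum q (r - 1) * s := by
      rw [Finset.sum_congr rfl (fun H hH => hall H (Finset.mem_filter.mp hH).2.1),
        Finset.sum_const, smul_eq_mul, hTPcard]
    have hswapP := sum_cnt TP S
    -- the value of each term
    have htermP : ∀ W ∈ S, (TP.filter fun H => W ≤ H).card
        = if P ≤ W then gNum q (r - h) else gNum q (r - h - 1) := by
      intro W hW
      have hfil : TP.filter (fun H => W ≤ H) = Finset.univ.filter
          (fun H : Submodule F (Fin r → F) =>
            Module.finrank F H = r - 1 ∧ (P ⊔ W) ≤ H) := by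
        rw [hTP, Finset.filter_filter]
        apply Finset.filter_congr
        intro H _
        simp only [sup_le_iff]
        tauto
      have hcardPW := hcardW (P ⊔ W)
      by_cases hPW : P ≤ W
      · have hPWe : P ⊔ W = W := sup_eq_right.mpr hPW
        rw [hfil, hcardPW, hPWe, hfa W hW, if_pos hPW]
      · have hinf : Module.finrank F ↥(P ⊓ W) = 0 := by
          have hle1 : Module.finrank F ↥(P ⊓ W) ≤ Module.finrank F P :=
            Submodule.finrank_mono inf_le_left
          rw [hP] at hle1
          rcases Nat.lt_or_ge (Module.finrank F ↥(P ⊓ W)) 1 with h' | h'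
          · omega
          · exfalso
            have : P ⊓ W = P := Submodule.eq_of_le_of_finrank_le inf_le_left (by omega)
            exact hPW (this ▸ inf_le_right)
        have hsup : Module.finrank F ↥(P ⊔ W) = h + 1 := by
          have := Submodule.finrank_sup_add_finrank_inf_eq P W
          rw [hinf, hP, hfa W hW] at this
          omega
        rw [hfil, hcardPW, hsup, if_neg hPW]
        congr 1
    -- split the sum according to whether P ≤ W
    have hM : mult S P ≤ n := by
      rw [← hcard]
      exact Multiset.countP_le_card _ S
    have hE1 : mult S P * gNum q (r - h) + (n - mult S P) * gNum q (r - h - 1)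
        = gNum q (r - 1) * s := by
      rw [← hsumTP, hswapP]
      have hsplit := Multiset.filter_add_not (fun W => P ≤ W) S
      conv_rhs => rw [← hsplit]
      rw [Multiset.map_add, Multiset.sum_add]
      have e1 : ((S.filter (fun W => P ≤ W)).map
          (fun W => (TP.filter fun H => W ≤ H).card)).sum
          = mult S P * gNum q (r - h) := by
        have : (S.filter (fun W => P ≤ W)).map (fun W => (TP.filter fun H => W ≤ H).card)
            = (S.filter (fun W => P ≤ W)).map (fun _ => gNum q (r - h)) := by
          apply Multiset.map_congr rfl
          intro W hW
          rw [htermP W (Multiset.mem_of_mem_filter hW),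
            if_pos ((Multiset.mem_filter.mp hW).2)]
        rw [this, Multiset.map_const', Multiset.sum_replicate, smul_eq_mul,
          ← Multiset.countP_eq_card_filter]
        rfl
      have e2 : ((S.filter (fun W => ¬ P ≤ W)).map
          (fun W => (TP.filter fun H => W ≤ H).card)).sum
          = (n - mult S P) * gNum q (r - h - 1) := by
        have : (S.filter (fun W => ¬ P ≤ W)).map (fun W => (TP.filter fun H => W ≤ H).card)
            = (S.filter (fun W => ¬ P ≤ W)).map (fun _ => gNum q (r - h - 1)) := by
          apply Multiset.map_congr rfl
          intro W hW
          rw [htermP W (Multiset.mem_of_mem_filter hW),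
            if_neg ((Multiset.mem_filter.mp hW).2)]
        rw [this, Multiset.map_const', Multiset.sum_replicate, smul_eq_mul]
        congr 1
        have h2 : Multiset.card (S.filter (fun W => P ≤ W))
            + Multiset.card (S.filter (fun W => ¬ P ≤ W)) = n := by
          rw [← Multiset.card_add, hsplit, hcard]
        have h3 : mult S P = Multiset.card (S.filter (fun W => P ≤ W)) :=
          Multiset.countP_eq_card_filter _ _
        omega
      rw [e1, e2]
    -- final algebra over ℤ
    have hq1 : 1 ≤ q := by omega
    obtain ⟨k, hk⟩ : ∃ k, r = k + h + 1 := ⟨r - h - 1, by omega⟩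
    have ek0 : r - h - 1 = k := by omega
    have ek1 : r - h = k + 1 := by omega
    have ek2 : r - 1 = k + h := by omega
    rw [ek0, ek1, ek2] at hE1
    rw [ek1] at heq
    rw [hk] at heq
    rw [ek1]
    have g1 : (gNum q (k + 1) : ℤ) * (q - 1) = q * q ^ k - 1 := by
      rw [gNum_mul_int, pow_succ]; ring
    have g2 : (gNum q k : ℤ) * (q - 1) = q ^ k - 1 := gNum_mul_int q k
    have g3 : (gNum q (k + h) : ℤ) * (q - 1) = q ^ k * q ^ h - 1 := by
      rw [gNum_mul_int, pow_add]
    have g4 : (gNum q (k + h + 1) : ℤ) * (q - 1) = q ^ k * q ^ h * q - 1 := by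
      rw [gNum_mul_int, pow_add, pow_add, pow_one]
    have gh : (gNum q h : ℤ) * (q - 1) = q ^ h - 1 := gNum_mul_int q h
    have hE1z : (mult S P : ℤ) * gNum q (k + 1) + ((n : ℤ) - mult S P) * gNum q k
        = gNum q (k + h) * s := by
      zify [hM] at hE1
      linarith [hE1]
    have hE2z : (n : ℤ) * gNum q (k + 1) = s * gNum q (k + h + 1) := by
      exact_mod_cast heq
    have hq2' : (2 : ℤ) ≤ (q : ℤ) := by exact_mod_cast hq2
    have hA0 : ((q : ℤ) - 1) * q ^ k ≠ 0 :=
      mul_ne_zero (by linarith) (pow_ne_zero _ (by linarith))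
    have hE1' : (mult S P : ℤ) * ((q : ℤ) * q ^ k - 1)
        + ((n : ℤ) - mult S P) * ((q : ℤ) ^ k - 1)
        = ((q : ℤ) ^ k * q ^ h - 1) * s := by
      linear_combination ((q : ℤ) - 1) * hE1z - (mult S P : ℤ) * g1
        - ((n : ℤ) - mult S P) * g2 + (s : ℤ) * g3
    have hE2' : (n : ℤ) * ((q : ℤ) * q ^ k - 1)
        = (s : ℤ) * ((q : ℤ) ^ k * q ^ h * q - 1) := by
      linear_combination ((q : ℤ) - 1) * hE2z - (n : ℤ) * g1 + (s : ℤ) * g4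
    have key : (mult S P : ℤ) * ((q : ℤ) * q ^ k - 1) * (((q : ℤ) - 1) * q ^ k)
        = ((q : ℤ) ^ h - 1) * s * (((q : ℤ) - 1) * q ^ k) := by
      linear_combination ((q : ℤ) * q ^ k - 1) * hE1' - ((q : ℤ) ^ k - 1) * hE2'
    have keyc : (mult S P : ℤ) * ((q : ℤ) * q ^ k - 1) = ((q : ℤ) ^ h - 1) * s :=
      mul_right_cancel₀ hA0 key
    apply Nat.eq_of_mul_eq_mul_right (show 0 < q - 1 by omega)
    zify [hq1]
    linear_combination keyc + (mult S P : ℤ) * g1 - (s : ℤ) * gh
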